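/- arXiv:1408.0815 — 3 statements merged into one kernel-verified Lean document; each statement's English description precedes it below -/
import Mathlib

section
/- Let σ, h, ψ, Ê be as above and define H(u,v,α) = v²/2 + γu²/4 + ψ(α) + (α + Êu)²/(2Ê). Then there exist constants μ, μ' > 0 such that μ·I ≤ D²H(u,v,α) ≤ μ'·I for all (u,v,α) ∈ ℝ³, i.e., H is uniformly convex with bounded Hessian. -/
/-!
By the inverse function rule and the fundamental theorem of calculus,
`ψ''(α) = 1/(E - σ'(h⁻¹ α)) - 1/Ê`, and `H` is a sum of functions of linear forms, so
`D²H(x)[w, w] = w₁² + (γ/2) w₀² + ψ''(x₂) w₂² + (w₂ + Ê w₀)²/Ê`.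
Since `E - Γ < E - σ' < E - γ < Ê`, the coefficient `ψ''` is pinched between the positive
constants `1/(E - γ) - 1/Ê` and `1/(E - Γ) - 1/Ê`, which gives both bounds.
-/

open Function

theorem StrictAnti.continuous_of_leftInverse {f g : ℝ → ℝ} (hf : StrictAnti f)
    (hli : LeftInverse g f) (hri : RightInverse g f) : Continuous g := by
  have hg : Antitone g := fun a b hab => hf.le_iff_ge.1 (by rwa [hri a, hri b])
  exact continuous_ofDual.comp (hg.dual_right.continuous_of_surjective hli.surjective)

theorem hasDerivAt_inverse_of_hasDerivAt_neg {f f' g : ℝ → ℝ} (hf : ∀ x, HasDerivAt f (f' x) x)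
    (hf' : ∀ x, f' x < 0) (hli : LeftInverse g f) (hri : RightInverse g f) (a : ℝ) :
    HasDerivAt g (f' (g a))⁻¹ a :=
  HasDerivAt.of_local_left_inverse
    ((strictAnti_of_hasDerivAt_neg hf hf').continuous_of_leftInverse hli hri).continuousAt
    (hf (g a)) (hf' _).ne (Filter.Eventually.of_forall hri)

theorem iteratedFDeriv_two_sum_comp_clm_apply {E ι : Type*} [NormedAddCommGroup E]
    [NormedSpace ℝ E] (s : Finset ι) (φ φ' φ'' : ι → ℝ → ℝ) (ℓ : ι → E →L[ℝ] ℝ)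
    (hφ : ∀ i t, HasDerivAt (φ i) (φ' i t) t) (hφ' : ∀ i t, HasDerivAt (φ' i) (φ'' i t) t)
    (x w : E) :
    iteratedFDeriv ℝ 2 (fun y => ∑ i ∈ s, φ i (ℓ i y)) x ![w, w] =
      ∑ i ∈ s, φ'' i (ℓ i x) * ℓ i w ^ 2 := by
  have hD : fderiv ℝ (fun y => ∑ i ∈ s, φ i (ℓ i y)) = fun y => ∑ i ∈ s, φ' i (ℓ i y) • ℓ i :=
    funext fun y => (HasFDerivAt.fun_sum fun i _ =>
      (hφ i _).comp_hasFDerivAt y (ℓ i).hasFDerivAt).fderiv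
  have hD2 : HasFDerivAt (fun y => ∑ i ∈ s, φ' i (ℓ i y) • ℓ i)
      (∑ i ∈ s, (φ'' i (ℓ i x) • ℓ i).smulRight (ℓ i)) x :=
    HasFDerivAt.fun_sum fun i _ =>
      ((hφ' i _).comp_hasFDerivAt x (ℓ i).hasFDerivAt).smul_const (ℓ i)
  rw [iteratedFDeriv_two_apply, hD, hD2.fderiv]
  simp [sq, mul_assoc]

theorem iteratedFDeriv_two_entropy_apply (γ e : ℝ) (he : e ≠ 0) {ψ ψ' ψ'' : ℝ → ℝ}
    (hψ : ∀ t, HasDerivAt ψ (ψ' t) t) (hψ' : ∀ t, HasDerivAt ψ' (ψ'' t) t)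
    (x w : EuclideanSpace ℝ (Fin 3)) :
    iteratedFDeriv ℝ 2 (fun y : EuclideanSpace ℝ (Fin 3) =>
        y 1 ^ 2 / 2 + γ * y 0 ^ 2 / 4 + ψ (y 2) + (y 2 + e * y 0) ^ 2 / (2 * e)) x ![w, w] =
      w 1 ^ 2 + γ / 2 * w 0 ^ 2 + ψ'' (x 2) * w 2 ^ 2 + (w 2 + e * w 0) ^ 2 / e := by
  let P := EuclideanSpace.proj (𝕜 := ℝ) (ι := Fin 3)
  have key := iteratedFDeriv_two_sum_comp_clm_apply Finset.univ
    ![fun t => t ^ 2 / 2, fun t => γ * t ^ 2 / 4, ψ, fun t => t ^ 2 / (2 * e)]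
    ![id, fun t => γ * t / 2, ψ', fun t => t / e]
    ![1, fun _ => γ / 2, ψ'', fun _ => 1 / e]
    ![P 1, P 0, P 2, P 2 + e • P 0] ?_ ?_ x w
  · convert key using 2
    · simp [Fin.sum_univ_four, P]
    · simp [Fin.sum_univ_four, P, div_eq_inv_mul]
  · intro i t
    fin_cases i
    · simpa using (hasDerivAt_pow 2 t).div_const 2
    · show HasDerivAt (fun t => γ * t ^ 2 / 4) (γ * t / 2) t
      exact (((hasDerivAt_pow 2 t).const_mul γ).div_const 4).congr_deriv (by ring)
    · exact hψ t
    · show HasDerivAt (fun t => t ^ 2 / (2 * e)) (t / e) t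
      exact ((hasDerivAt_pow 2 t).div_const (2 * e)).congr_deriv (by norm_num; field_simp)
  · intro i t
    fin_cases i
    · exact hasDerivAt_id t
    · simpa [mul_div_right_comm] using ((hasDerivAt_id t).const_mul γ).div_const 2
    · exact hψ' t
    · simpa using (hasDerivAt_id t).div_const e

theorem exists_quadratic_form_bounds {a e m M : ℝ} (ha : 0 < a) (he : 0 < e) (hm : 0 < m) :
    ∃ μ μ' : ℝ, 0 < μ ∧ 0 < μ' ∧ ∀ c ∈ Set.Icc m M, ∀ w : EuclideanSpace ℝ (Fin 3),
      μ * ‖w‖ ^ 2 ≤ w 1 ^ 2 + a * w 0 ^ 2 + c * w 2 ^ 2 + (w 2 + e * w 0) ^ 2 / e ∧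
      w 1 ^ 2 + a * w 0 ^ 2 + c * w 2 ^ 2 + (w 2 + e * w 0) ^ 2 / e
        ≤ μ' * ‖w‖ ^ 2 := by
  refine ⟨min a (min 1 m), 1 + a + 2 * e + |M| + 2 / e, by positivity, by positivity,
    fun c ⟨hmc, hcM⟩ w => ?_⟩
  rw [EuclideanSpace.real_norm_sq_eq, Fin.sum_univ_three]
  have hμa : min a (min 1 m) ≤ a := min_le_left _ _
  have hμ1 : min a (min 1 m) ≤ 1 := (min_le_right _ _).trans (min_le_left _ _)
  have hμm : min a (min 1 m) ≤ m := (min_le_right _ _).trans (min_le_right _ _)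
  have hcross : (w 2 + e * w 0) ^ 2 / e ≤ 2 / e * w 2 ^ 2 + 2 * e * w 0 ^ 2 :=
    calc (w 2 + e * w 0) ^ 2 / e ≤ (2 * w 2 ^ 2 + 2 * (e * w 0) ^ 2) / e := by
          gcongr; nlinarith [sq_nonneg (w 2 - e * w 0)]
      _ = 2 / e * w 2 ^ 2 + 2 * e * w 0 ^ 2 := by field_simp
  constructor
  · nlinarith [div_nonneg (sq_nonneg (w 2 + e * w 0)) he.le, sq_nonneg (w 0), sq_nonneg (w 1),
      sq_nonneg (w 2)]
  · nlinarith [le_abs_self M, sq_nonneg (w 0), sq_nonneg (w 1), sq_nonneg (w 2),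
      div_pos two_pos he, abs_nonneg M]

theorem stmt_2_general (σ : ℝ → ℝ) (γ Γ E : ℝ)
    (hσ : ContDiff ℝ 2 σ)
    (hγ : 0 < γ) (hbounds : ∀ u, γ < deriv σ u ∧ deriv σ u < Γ)
    (hE : Γ < E) (h hinv : ℝ → ℝ) (hdef : ∀ u, h u = σ u - E * u)
    (hli : Function.LeftInverse hinv h) (hri : Function.RightInverse hinv h)
    (Ehat : ℝ) (hEhat : Ehat = E - γ / 2)
    (ψ : ℝ → ℝ) (hψ : ∀ α, ψ α = ∫ ξ in (0:ℝ)..α, (-hinv ξ - ξ / Ehat))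
    (H : EuclideanSpace ℝ (Fin 3) → ℝ)
    (hH : ∀ x : EuclideanSpace ℝ (Fin 3),
      H x = (x 1) ^ 2 / 2 + γ * (x 0) ^ 2 / 4 + ψ (x 2)
        + (x 2 + Ehat * x 0) ^ 2 / (2 * Ehat)) :
    ∃ μ μ' : ℝ, 0 < μ ∧ 0 < μ' ∧
      ∀ (x w : EuclideanSpace ℝ (Fin 3)),
        μ * ‖w‖ ^ 2 ≤ iteratedFDeriv ℝ 2 H x ![w, w] ∧
        iteratedFDeriv ℝ 2 H x ![w, w] ≤ μ' * ‖w‖ ^ 2 := by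
  have hγΓ : γ < Γ := (hbounds 0).1.trans (hbounds 0).2
  have hEhat_pos : 0 < Ehat := by linarith
  have hh : ∀ u, HasDerivAt h (deriv σ u - E) u := fun u => by
    rw [show h = fun u => σ u - E * u from funext hdef]
    exact ((hσ.differentiable (by norm_num) u).hasDerivAt.sub
      ((hasDerivAt_id' u).const_mul E)).congr_deriv (by rw [mul_one])
  have hinv' :=
    hasDerivAt_inverse_of_hasDerivAt_neg hh (fun u => by linarith [(hbounds u).2]) hli hri
  have hψ' : ∀ a, HasDerivAt ψ (-hinv a - a / Ehat) a := by
    have hcont : Continuous hinv := continuous_iff_continuousAt.2 fun a => (hinv' a).continuousAt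
    intro a
    rw [funext hψ]
    have hF : Continuous fun ξ => -hinv ξ - ξ / Ehat := by fun_prop
    exact (hF.integral_hasStrictDerivAt 0 a).hasDerivAt
  have hψ'' : ∀ a, HasDerivAt (fun a => -hinv a - a / Ehat)
      ((E - deriv σ (hinv a))⁻¹ - Ehat⁻¹) a := fun a =>
    ((hinv' a).neg.sub ((hasDerivAt_id a).div_const Ehat)).congr_deriv (by
      rw [neg_inv, neg_sub, one_div])
  have hmin : 0 < (E - γ)⁻¹ - Ehat⁻¹ := sub_pos.2 (inv_strictAnti₀ (by linarith) (by linarith))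
  obtain ⟨μ, μ', hμ, hμ', hQ⟩ := exists_quadratic_form_bounds (M := (E - Γ)⁻¹ - Ehat⁻¹)
    (half_pos hγ) hEhat_pos hmin
  refine ⟨μ, μ', hμ, hμ', fun x w => ?_⟩
  rw [funext hH, iteratedFDeriv_two_entropy_apply γ Ehat hEhat_pos.ne' hψ' hψ'' x w]
  obtain ⟨hlo, hhi⟩ := hbounds (hinv (x 2))
  exact hQ ((E - deriv σ (hinv (x 2)))⁻¹ - Ehat⁻¹)
    ⟨by gcongr; linarith, by gcongr⟩ w

/-- Uniform convexity with bounded Hessian of the relaxation entropy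
`H(u,v,α) = v²/2 + γu²/4 + ψ(α) + (α + Êu)²/(2Ê)` for the elasticity system:
there exist `μ, μ' > 0` with `μ I ≤ D²H ≤ μ' I` on `ℝ³`. -/
theorem stmt_2 (σ : ℝ → ℝ) (γ Γ E K : ℝ)
    (hσ : ContDiff ℝ 2 σ) (hσ0 : σ 0 = 0)
    (hγ : 0 < γ) (hbounds : ∀ u, γ < deriv σ u ∧ deriv σ u < Γ)
    (hK : ∀ u, |deriv (deriv σ) u| ≤ K)
    (hE : Γ < E) (h hinv : ℝ → ℝ) (hdef : ∀ u, h u = σ u - E * u)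
    (hli : Function.LeftInverse hinv h) (hri : Function.RightInverse hinv h)
    (Ehat : ℝ) (hEhat : Ehat = E - γ / 2)
    (ψ : ℝ → ℝ) (hψ : ∀ α, ψ α = ∫ ξ in (0:ℝ)..α, (-hinv ξ - ξ / Ehat))
    (H : EuclideanSpace ℝ (Fin 3) → ℝ)
    (hH : ∀ x : EuclideanSpace ℝ (Fin 3),
      H x = (x 1) ^ 2 / 2 + γ * (x 0) ^ 2 / 4 + ψ (x 2)
        + (x 2 + Ehat * x 0) ^ 2 / (2 * Ehat)) :
    ∃ μ μ' : ℝ, 0 < μ ∧ 0 < μ' ∧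
      ∀ (x w : EuclideanSpace ℝ (Fin 3)),
        μ * ‖w‖ ^ 2 ≤ iteratedFDeriv ℝ 2 H x ![w, w] ∧
        iteratedFDeriv ℝ 2 H x ![w, w] ≤ μ' * ‖w‖ ^ 2 :=
  stmt_2_general σ γ Γ E hσ hγ hbounds hE h hinv hdef hli hri Ehat hEhat ψ hψ H hH
end

section
/- Let P satisfy 0 < γ < -∂_v P < Γ, |∂_Z P| < C̄, |∫₀^v P_{ZZ}(τ,Z)dτ| < C̄; E > Γ. Then |∂_{ZZ}(∫_{h(0,Z)}^α j(ξ,Z)dξ)| ≤ C̄(1 + C̄/(E-Γ)) for all α ∈ ℝ, Z ∈ [0,1]. -/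
/-!
Put `w(z) = j(α, z)`, so that `P(w(z), z) + E w(z) = -α`. The formula for the integral of an
inverse function gives `∫_{h(0,z)}^α j(ξ,z) dξ = α w(z) - ∫_0^{w(z)} h(v,z) dv`; when this is
differentiated the boundary term cancels against `α w'` because `h(w,z) = α`, leaving the first
derivative `∫_0^{w(z)} P_Z(v,z) dv`. A second application of the Leibniz rule gives
`P_Z(w,Z) w' + ∫_0^w P_ZZ`, and implicit differentiation gives `w' = -P_Z / (P_v + E)` with
`P_v + E > E - Γ > 0`, so the two terms are bounded by `C̄² / (E - Γ)` and `C̄`.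

Since `j` is only known to invert `h` for `Z ∈ [0,1]`, all derivatives are taken within `[0,1]`;
at the endpoints `deriv` of the first derivative is then either this one-sided value or the junk
value `0`.
-/

open Set Filter Topology Function intervalIntegral

section Partials

variable {f fx fy : ℝ → ℝ → ℝ}

theorem hasFDerivAt_uncurry_of_partials
    (hx : ∀ x y, HasDerivAt (f · y) (fx x y) x) (hy : ∀ x y, HasDerivAt (f x ·) (fy x y) y)
    {p : ℝ × ℝ} (cx : ContinuousAt (uncurry fx) p) (cy : ContinuousAt (uncurry fy) p) :
    HasFDerivAt (uncurry f)
      (fx p.1 p.2 • ContinuousLinearMap.fst ℝ ℝ ℝ + fy p.1 p.2 • ContinuousLinearMap.snd ℝ ℝ ℝ)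
      p := by
  have hc : Continuous fun c : ℝ => (1 : ℝ →L[ℝ] ℝ).smulRight c :=
    (ContinuousLinearMap.smulRightL ℝ ℝ ℝ 1).continuous
  have := hasStrictFDerivAt_uncurry_coprod (u := p)
    (f₁ := fun x y => (1 : ℝ →L[ℝ] ℝ).smulRight (fx x y))
    (f₂ := fun x y => (1 : ℝ →L[ℝ] ℝ).smulRight (fy x y))
    (.of_forall fun q => (hx q.1 q.2).hasFDerivAt)
    (.of_forall fun q => (hy q.1 q.2).hasFDerivAt)
    (hc.continuousAt.comp cx) (hc.continuousAt.comp cy)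
  exact this.hasFDerivAt.congr_fderiv (by ext <;> simp [HasUncurry.uncurry])

theorem HasDerivWithinAt.comp_of_partials
    (hx : ∀ x y, HasDerivAt (f · y) (fx x y) x) (hy : ∀ x y, HasDerivAt (f x ·) (fy x y) y)
    (cx : Continuous (uncurry fx)) (cy : Continuous (uncurry fy))
    {u : ℝ → ℝ} {u' z : ℝ} {s : Set ℝ} (hu : HasDerivWithinAt u u' s z) :
    HasDerivWithinAt (fun z => f (u z) z) (fx (u z) z * u' + fy (u z) z) s z := by
  have hcurve : HasDerivWithinAt (fun t => (u t, t)) (u', 1) s z :=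
    hu.prodMk (hasDerivWithinAt_id z s)
  have := (hasFDerivAt_uncurry_of_partials hx hy (p := (u z, z)) cx.continuousAt
    cy.continuousAt).comp_hasDerivWithinAt (f := fun t => (u t, t)) z hcurve
  exact this.congr_deriv (by simp [mul_comm])

theorem partial_fst_eq_fderiv {x y a : ℝ} (hf : DifferentiableAt ℝ (uncurry f) (x, y))
    (hx : HasDerivAt (f · y) a x) : a = fderiv ℝ (uncurry f) (x, y) (1, 0) :=
  hx.unique <| hf.hasFDerivAt.comp_hasDerivAt (f := fun t => (t, y)) x
    ((hasDerivAt_id x).prodMk (hasDerivAt_const x y))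

theorem partial_snd_eq_fderiv {x y a : ℝ} (hf : DifferentiableAt ℝ (uncurry f) (x, y))
    (hy : HasDerivAt (f x ·) a y) : a = fderiv ℝ (uncurry f) (x, y) (0, 1) :=
  hy.unique <| hf.hasFDerivAt.comp_hasDerivAt (f := fun t => (x, t)) y
    ((hasDerivAt_const y x).prodMk (hasDerivAt_id y))

theorem ContDiff.uncurry_partial_fst {m : WithTop ℕ∞} (hf : ContDiff ℝ (m + 1) (uncurry f))
    (hx : ∀ x y, HasDerivAt (f · y) (fx x y) x) : ContDiff ℝ m (uncurry fx) := by
  have hd := hf.differentiable (by simp)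
  have : uncurry fx = fun p => fderiv ℝ (uncurry f) p (1, 0) :=
    funext fun p => partial_fst_eq_fderiv (hd p) (hx p.1 p.2)
  rw [this]
  exact (hf.fderiv_right le_rfl).clm_apply contDiff_const

theorem ContDiff.uncurry_partial_snd {m : WithTop ℕ∞} (hf : ContDiff ℝ (m + 1) (uncurry f))
    (hy : ∀ x y, HasDerivAt (f x ·) (fy x y) y) : ContDiff ℝ m (uncurry fy) := by
  have hd := hf.differentiable (by simp)
  have : uncurry fy = fun p => fderiv ℝ (uncurry f) p (0, 1) :=
    funext fun p => partial_snd_eq_fderiv (hd p) (hy p.1 p.2)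
  rw [this]
  exact (hf.fderiv_right le_rfl).clm_apply contDiff_const

end Partials

section Leibniz

variable {Q QZ : ℝ → ℝ → ℝ}

theorem hasDerivAt_intervalIntegral_of_partial (a b z : ℝ) (hQ : Continuous (uncurry Q))
    (hQZ : ∀ v z, HasDerivAt (Q v ·) (QZ v z) z) (cQZ : Continuous (uncurry QZ)) :
    HasDerivAt (fun z => ∫ v in a..b, Q v z) (∫ v in a..b, QZ v z) z := by
  have hslice : ∀ {F : ℝ → ℝ → ℝ}, Continuous (uncurry F) → ∀ z, Continuous (F · z) :=
    fun hF z => hF.comp (continuous_id.prodMk continuous_const)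
  obtain ⟨M, hM⟩ := ((isCompact_uIcc (a := a) (b := b)).prod
    (isCompact_closedBall z 1)).exists_bound_of_continuousOn cQZ.continuousOn
  refine (hasDerivAt_integral_of_dominated_loc_of_deriv_le (bound := fun _ => M)
    (Metric.ball_mem_nhds z one_pos) (.of_forall fun y => (hslice hQ y).aestronglyMeasurable)
    ((hslice hQ z).intervalIntegrable _ _) (hslice cQZ z).aestronglyMeasurable ?_
    intervalIntegrable_const (.of_forall fun v _ y _ => hQZ v y)).2
  exact .of_forall fun v hv y hy =>
    hM (v, y) ⟨uIoc_subset_uIcc hv, Metric.ball_subset_closedBall hy⟩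

theorem HasDerivWithinAt.intervalIntegral_of_partial (a : ℝ) (hQ : Continuous (uncurry Q))
    (hQZ : ∀ v z, HasDerivAt (Q v ·) (QZ v z) z) (cQZ : Continuous (uncurry QZ))
    {u : ℝ → ℝ} {u' z : ℝ} {s : Set ℝ} (hu : HasDerivWithinAt u u' s z) :
    HasDerivWithinAt (fun z => ∫ v in a..u z, Q v z)
      (Q (u z) z * u' + ∫ v in a..u z, QZ v z) s z := by
  have hslice : ∀ y, Continuous (Q · y) := fun y =>
    hQ.comp (continuous_id.prodMk continuous_const)
  refine hu.comp_of_partials (f := fun w y => ∫ v in a..w, Q v y) (fx := Q)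
    (fy := fun w y => ∫ v in a..w, QZ v y) (fun w y => ?_)
    (fun w y => hasDerivAt_intervalIntegral_of_partial a w y hQ hQZ cQZ) hQ ?_
  · exact integral_hasDerivAt_right ((hslice y).intervalIntegrable _ _)
      ((hslice y).stronglyMeasurableAtFilter _ _) (hslice y).continuousAt
  · exact continuous_parametric_intervalIntegral_of_continuous
      (f := fun (p : ℝ × ℝ) v => QZ v p.2)
      (cQZ.comp (continuous_snd.prodMk (continuous_snd.comp continuous_fst))) continuous_fst

end Leibniz

section Implicit

variable {G Gv Gz : ℝ → ℝ → ℝ} {w : ℝ → ℝ} {s : Set ℝ} {k : ℝ}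

theorem mul_abs_sub_le_abs_sub_of_le_deriv {f f' : ℝ → ℝ} {δ : ℝ}
    (hf : ∀ x, HasDerivAt f (f' x) x) (hδ : ∀ x, δ ≤ f' x) (x y : ℝ) :
    δ * |y - x| ≤ |f y - f x| := by
  wlog hxy : x ≤ y generalizing x y
  · rw [abs_sub_comm, abs_sub_comm (f y)]
    exact this y x (le_of_not_ge hxy)
  rw [abs_of_nonneg (sub_nonneg.2 hxy)]
  refine (mul_sub_le_image_sub_of_le_deriv (fun x => (hf x).differentiableAt)
    (fun x => (hf x).deriv ▸ hδ x) hxy).trans (le_abs_self _)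

theorem abs_sub_le_of_apply_eq {δ c z Z : ℝ} (hs : Convex ℝ s)
    (hGv : ∀ v z, HasDerivAt (G · z) (Gv v z) v) (hGv_ge : ∀ v, ∀ z ∈ s, δ ≤ Gv v z)
    (hδ : 0 < δ) (hGz : ∀ v z, HasDerivAt (G v ·) (Gz v z) z)
    (hGz_le : ∀ v, ∀ z ∈ s, |Gz v z| ≤ c) (hw : ∀ z ∈ s, G (w z) z = k) (hz : z ∈ s)
    (hZ : Z ∈ s) : |w z - w Z| ≤ c / δ * |z - Z| := by
  have hlower : δ * |w z - w Z| ≤ |G (w z) z - G (w Z) z| :=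
    mul_abs_sub_le_abs_sub_of_le_deriv (fun v => hGv v z) (fun v => hGv_ge v z hz) _ _
  have hupper : |G (w Z) z - G (w Z) Z| ≤ c * |z - Z| :=
    hs.norm_image_sub_le_of_norm_hasDerivWithin_le (fun y _ => (hGz (w Z) y).hasDerivWithinAt)
      (fun y hy => hGz_le (w Z) y hy) hZ hz
  rw [hw z hz, ← hw Z hZ, abs_sub_comm (G (w Z) Z)] at hlower
  rw [div_mul_eq_mul_div, le_div_iff₀ hδ]
  linarith

theorem hasDerivWithinAt_of_apply_eq_of_lipschitz {a b K Z : ℝ}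
    (hG : HasFDerivAt (uncurry G)
      (a • ContinuousLinearMap.fst ℝ ℝ ℝ + b • ContinuousLinearMap.snd ℝ ℝ ℝ) (w Z, Z))
    (ha : a ≠ 0) (hw : ∀ z ∈ s, G (w z) z = k) (hZ : Z ∈ s)
    (hK : ∀ z ∈ s, |w z - w Z| ≤ K * |z - Z|) :
    HasDerivWithinAt w (-b / a) s Z := by
  have hbound : ∀ᶠ z in 𝓝[s] Z, ‖(w z, z) - (w Z, Z)‖ ≤ max K 1 * ‖z - Z‖ := by
    filter_upwards [self_mem_nhdsWithin] with z hz
    simp only [Prod.mk_sub_mk, Prod.norm_def, Real.norm_eq_abs]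
    exact max_le ((hK z hz).trans (by gcongr; exact le_max_left _ _))
      (le_mul_of_one_le_left (abs_nonneg _) (le_max_right _ _))
  have hO : (fun z => (w z, z) - (w Z, Z)) =O[𝓝[s] Z] fun z => z - Z :=
    Asymptotics.IsBigO.of_bound _ hbound
  have hcurve : Tendsto (fun z => (w z, z)) (𝓝[s] Z) (𝓝 (w Z, Z)) :=
    tendsto_sub_nhds_zero_iff.1 <| hO.trans_tendsto <|
      tendsto_sub_nhds_zero_iff.2 (tendsto_nhdsWithin_of_tendsto_nhds tendsto_id)
  -- Along `z ↦ (w z, z)` the level-set condition kills `G`, leaving `a Δw + b Δz = o(Δz)`.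
  have hlin := (hG.isLittleO.comp_tendsto hcurve).trans_isBigO hO
  rw [hasDerivWithinAt_iff_isLittleO]
  refine (hlin.const_mul_left (-a⁻¹)).congr' ?_ (.refl _ _)
  filter_upwards [self_mem_nhdsWithin] with z hz
  simp only [comp_apply, uncurry_apply_pair, hw z hz, hw Z hZ, add_apply,
    smul_apply, ContinuousLinearMap.coe_fst', ContinuousLinearMap.coe_snd',
    Prod.fst_sub, Prod.snd_sub, smul_eq_mul, sub_self, zero_sub]
  field_simp
  ring

theorem hasDerivWithinAt_of_apply_eq {δ c Z : ℝ} (hs : Convex ℝ s)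
    (hGv : ∀ v z, HasDerivAt (G · z) (Gv v z) v) (cGv : Continuous (uncurry Gv))
    (hGv_ge : ∀ v, ∀ z ∈ s, δ ≤ Gv v z) (hδ : 0 < δ)
    (hGz : ∀ v z, HasDerivAt (G v ·) (Gz v z) z) (cGz : Continuous (uncurry Gz))
    (hGz_le : ∀ v, ∀ z ∈ s, |Gz v z| ≤ c) (hw : ∀ z ∈ s, G (w z) z = k) (hZ : Z ∈ s) :
    HasDerivWithinAt w (-Gz (w Z) Z / Gv (w Z) Z) s Z :=
  hasDerivWithinAt_of_apply_eq_of_lipschitz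
    (hasFDerivAt_uncurry_of_partials (p := (w Z, Z)) hGv hGz cGv.continuousAt
      cGz.continuousAt)
    (hδ.trans_le (hGv_ge _ _ hZ)).ne' hw hZ
    fun _ hz => abs_sub_le_of_apply_eq hs hGv hGv_ge hδ hGz hGz_le hw hz hZ

end Implicit

section InverseIntegral

variable {f g : ℝ → ℝ}

theorem Continuous.continuous_of_leftInverse_of_rightInverse (hf : Continuous f)
    (hgf : LeftInverse g f) (hfg : RightInverse g f) : Continuous g := by
  rcases hf.strictMono_of_inj hgf.injective with hmono | hanti
  · exact Monotone.continuous_of_surjective (fun x y hxy => by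
      rwa [← hmono.le_iff_le, hfg x, hfg y]) hgf.surjective
  · have : Monotone (fun y => g (-y)) := fun x y hxy => by
      rw [← hanti.le_iff_ge, hfg, hfg]; linarith
    simpa [comp_def] using (this.continuous_of_surjective
      fun x => ⟨-f x, by simp [hgf x]⟩).comp continuous_neg

theorem integral_inverse_eq {f' : ℝ → ℝ} (hf : ∀ x, HasDerivAt f (f' x) x)
    (hf' : Continuous f') (hgf : LeftInverse g f) (hfg : RightInverse g f) (a b : ℝ) :
    ∫ y in f a..f b, g y = b * f b - a * f a - ∫ x in a..b, f x := by
  have hg : Continuous g := (continuous_iff_continuousAt.2 fun x => (hf x).continuousAt)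
    |>.continuous_of_leftInverse_of_rightInverse hgf hfg
  rw [← integral_comp_mul_deriv (fun x _ => hf x) hf'.continuousOn hg]
  simp only [comp_apply, hgf _]
  rw [integral_mul_deriv_eq_deriv_mul (u := fun x => x) (fun x _ => hasDerivAt_id' x)
    (fun x _ => hf x) intervalIntegrable_const (hf'.intervalIntegrable _ _)]
  simp

theorem hasDerivWithinAt_integral_inverse {h hv hz j : ℝ → ℝ → ℝ} {s : Set ℝ}
    {α Z w' : ℝ}
    (hhv : ∀ v z, HasDerivAt (h · z) (hv v z) v) (chv : Continuous (uncurry hv))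
    (hhz : ∀ v z, HasDerivAt (h v ·) (hz v z) z) (chz : Continuous (uncurry hz))
    (hj : ∀ z ∈ s, LeftInverse (j · z) (h · z) ∧ RightInverse (j · z) (h · z))
    (hw : HasDerivWithinAt (j α ·) w' s Z) (hZ : Z ∈ s) :
    HasDerivWithinAt (fun z => ∫ ξ in h 0 z..α, j ξ z)
      (-∫ v in 0..j α Z, hz v Z) s Z := by
  have ch : Continuous (uncurry h) := continuous_iff_continuousAt.2 fun _ =>
    (hasFDerivAt_uncurry_of_partials hhv hhz chv.continuousAt chz.continuousAt).continuousAt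
  have hid : ∀ z ∈ s, ∫ ξ in h 0 z..α, j ξ z = j α z * α - ∫ v in 0..j α z, h v z := by
    intro z hzs
    have := integral_inverse_eq (hhv · z) (chv.comp (continuous_id.prodMk continuous_const))
      (hj z hzs).1 (hj z hzs).2 0 (j α z)
    rwa [show h (j α z) z = α from (hj z hzs).2 α, zero_mul, sub_zero] at this
  have hrhs := (hw.mul_const α).sub (hw.intervalIntegral_of_partial 0 ch hhz chz)
  refine (hrhs.congr hid (hid Z hZ)).congr_deriv ?_
  rw [show h (j α Z) Z = α from (hj Z hZ).2 α]
  ring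

end InverseIntegral

theorem deriv_eq_or_eq_zero_of_eqOn_Ioo {g φ : ℝ → ℝ} {a b Z ψ : ℝ} (hab : a < b)
    (hZ : Z ∈ Icc a b) (hgφ : EqOn g φ (Ioo a b)) (hφ : HasDerivWithinAt φ ψ (Icc a b) Z) :
    deriv g Z = ψ ∨ deriv g Z = 0 := by
  by_cases hg : DifferentiableAt ℝ g Z
  swap
  · exact Or.inr (deriv_zero_of_not_differentiableAt hg)
  left
  have hcl : Z ∈ closure (Ioo a b) := by rwa [closure_Ioo hab.ne]
  have : (𝓝[Ioo a b] Z).NeBot := mem_closure_iff_nhdsWithin_neBot.1 hcl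
  have hφ' := hφ.mono Ioo_subset_Icc_self
  have hgZ : g Z = φ Z := tendsto_nhds_unique
    (hg.continuousAt.continuousWithinAt.tendsto.congr' (eventually_nhdsWithin_of_forall hgφ))
    hφ'.continuousWithinAt.tendsto
  exact (uniqueDiffWithinAt_convex (convex_Ioo a b) (by simp [hab]) hcl).eq_deriv _
    (hg.hasDerivAt.hasDerivWithinAt.congr (fun x hx => (hgφ hx).symm) hgZ.symm) hφ'

theorem abs_mul_neg_div_add_le {a d I C δ : ℝ} (ha : |a| ≤ C) (hI : |I| ≤ C) (hδ : 0 < δ)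
    (hd : δ ≤ d) : |a * (-a / d) + I| ≤ C * (1 + C / δ) := by
  have hsq : |a * (-a / d)| ≤ C ^ 2 / δ := by
    rw [abs_mul, abs_div, abs_neg, abs_of_pos (hδ.trans_le hd), ← mul_div_assoc, ← sq]
    exact div_le_div₀ (by positivity) (pow_le_pow_left₀ (abs_nonneg a) ha 2) hδ hd
  calc |a * (-a / d) + I| ≤ C ^ 2 / δ + C := (abs_add_le _ _).trans (add_le_add hsq hI)
    _ = C * (1 + C / δ) := by ring

theorem stmt_10_general (P Pv PZ PZZ : ℝ → ℝ → ℝ) (γ Γ E Cbar : ℝ)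
    (hP : ContDiff ℝ 2 (fun p : ℝ × ℝ => P p.1 p.2))
    (hPv : ∀ v Z : ℝ, HasDerivAt (fun w => P w Z) (Pv v Z) v)
    (hPZ : ∀ v Z : ℝ, HasDerivAt (fun z => P v z) (PZ v Z) Z)
    (hPZZ : ∀ v Z : ℝ, HasDerivAt (fun z => PZ v z) (PZZ v Z) Z)
    (hPvbounds : ∀ (v Z : ℝ), Z ∈ Set.Icc (0:ℝ) 1 →
      γ < -Pv v Z ∧ -Pv v Z < Γ)
    (hPZbound : ∀ (v Z : ℝ), Z ∈ Set.Icc (0:ℝ) 1 → |PZ v Z| < Cbar)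
    (hPZZbound : ∀ (v Z : ℝ), Z ∈ Set.Icc (0:ℝ) 1 →
      |∫ τ in (0:ℝ)..v, PZZ τ Z| < Cbar)
    (hE : Γ < E)
    (h : ℝ → ℝ → ℝ) (hdef : ∀ v Z, h v Z = -P v Z - E * v)
    (j : ℝ → ℝ → ℝ)
    (hjinv : ∀ Z ∈ Set.Icc (0:ℝ) 1,
      (∀ v : ℝ, j (h v Z) Z = v) ∧ (∀ α : ℝ, h (j α Z) Z = α)) :
    ∀ (α Z : ℝ), Z ∈ Set.Icc (0:ℝ) 1 →
      |deriv (fun z => deriv (fun z' => ∫ ξ in (h 0 z')..α, j ξ z') z) Z|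
        ≤ Cbar * (1 + Cbar / (E - Γ)) := by
  intro α Z hZ
  have cPv : Continuous (uncurry Pv) := (hP.uncurry_partial_fst (m := 1) hPv).continuous
  have hPZ_C1 : ContDiff ℝ 1 (uncurry PZ) := hP.uncurry_partial_snd hPZ
  have cPZZ : Continuous (uncurry PZZ) := (hPZ_C1.uncurry_partial_snd (m := 0) hPZZ).continuous
  have hhv : ∀ v z, HasDerivAt (h · z) (-Pv v z - E) v := fun v z => by
    rw [show (h · z) = fun x => -P x z - E * x from funext (hdef · z)]
    exact ((hPv v z).neg.sub ((hasDerivAt_id' v).const_mul E)).congr_deriv (by ring)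
  have hhz : ∀ v z, HasDerivAt (h v ·) (-PZ v z) z := fun v z => by
    rw [show (h v ·) = fun x => -P v x - E * v from funext (hdef v ·)]
    exact (hPZ v z).neg.sub_const (E * v)
  have hw : ∀ z ∈ Icc (0 : ℝ) 1, HasDerivWithinAt (j α ·)
      (-PZ (j α z) z / (Pv (j α z) z + E)) (Icc 0 1) z := fun z hz =>
    hasDerivWithinAt_of_apply_eq (G := fun v z => P v z + E * v) (Gv := fun v z => Pv v z + E)
      (w := (j α ·)) (k := -α) (convex_Icc 0 1)
      (fun v z => ((hPv v z).add ((hasDerivAt_id' v).const_mul E)).congr_deriv (by ring))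
      (cPv.add continuous_const)
      (fun v z hz => by linarith [(hPvbounds v z hz).2]) (sub_pos.2 hE)
      (fun v z => (hPZ v z).add_const (E * v)) hPZ_C1.continuous
      (fun v z hz => (hPZbound v z hz).le)
      (fun z hz => by linarith [hdef (j α z) z, (hjinv z hz).2 α]) hz
  have hF : ∀ z ∈ Icc (0 : ℝ) 1, HasDerivWithinAt (fun z => ∫ ξ in h 0 z..α, j ξ z)
      (∫ v in 0..j α z, PZ v z) (Icc 0 1) z := fun z hz => by
    simpa [integral_neg] using hasDerivWithinAt_integral_inverse hhv
      (cPv.neg.sub continuous_const) hhz hPZ_C1.continuous.neg hjinv (hw z hz) hz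
  have hF' := (hw Z hZ).intervalIntegral_of_partial 0 hPZ_C1.continuous hPZZ cPZZ
  have hbound := abs_mul_neg_div_add_le (d := Pv (j α Z) Z + E) (hPZbound (j α Z) Z hZ).le
    (hPZZbound (j α Z) Z hZ).le (sub_pos.2 hE) (by linarith [(hPvbounds (j α Z) Z hZ).2])
  rcases deriv_eq_or_eq_zero_of_eqOn_Ioo zero_lt_one hZ (fun z hz =>
    ((hF z (Ioo_subset_Icc_self hz)).hasDerivAt (Icc_mem_nhds hz.1 hz.2)).deriv) hF'
    with hψ | h0
  · rwa [hψ]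
  · rw [h0, abs_zero]
    exact (abs_nonneg _).trans hbound

/-- Bound on the second `Z`-derivative of `∫_{h(0,Z)}^{α} j(ξ,Z) dξ`:
`|∂_{ZZ} (∫_{h(0,Z)}^α j(ξ,Z) dξ)| ≤ C̄ (1 + C̄/(E-Γ))`. -/
theorem stmt_10 (P Pv PZ PZZ : ℝ → ℝ → ℝ) (γ Γ E Cbar : ℝ) (hγ : 0 < γ)
    (hP : ContDiff ℝ 2 (fun p : ℝ × ℝ => P p.1 p.2))
    (hPv : ∀ v Z : ℝ, HasDerivAt (fun w => P w Z) (Pv v Z) v)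
    (hPZ : ∀ v Z : ℝ, HasDerivAt (fun z => P v z) (PZ v Z) Z)
    (hPZZ : ∀ v Z : ℝ, HasDerivAt (fun z => PZ v z) (PZZ v Z) Z)
    (hPvbounds : ∀ (v Z : ℝ), Z ∈ Set.Icc (0:ℝ) 1 →
      γ < -Pv v Z ∧ -Pv v Z < Γ)
    (hPZbound : ∀ (v Z : ℝ), Z ∈ Set.Icc (0:ℝ) 1 → |PZ v Z| < Cbar)
    (hPZZbound : ∀ (v Z : ℝ), Z ∈ Set.Icc (0:ℝ) 1 →
      |∫ τ in (0:ℝ)..v, PZZ τ Z| < Cbar)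
    (hE : Γ < E)
    (h : ℝ → ℝ → ℝ) (hdef : ∀ v Z, h v Z = -P v Z - E * v)
    (j : ℝ → ℝ → ℝ)
    (hjinv : ∀ Z ∈ Set.Icc (0:ℝ) 1,
      (∀ v : ℝ, j (h v Z) Z = v) ∧ (∀ α : ℝ, h (j α Z) Z = α)) :
    ∀ (α Z : ℝ), Z ∈ Set.Icc (0:ℝ) 1 →
      |deriv (fun z => deriv (fun z' => ∫ ξ in (h 0 z')..α, j ξ z') z) Z|
        ≤ Cbar * (1 + Cbar / (E - Γ)) :=
  stmt_10_general P Pv PZ PZZ γ Γ E Cbar hP hPv hPZ hPZZ hPvbounds hPZbound hPZZbound hE h hdef j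
    hjinv
end

section
/- Let ℰ, J: ℝⁿ → ℝ be C² with (γ-δ>0): EI ≤ D²ℰ ≤ (E+δ)I and (E+δ-γ)⁻¹I < D²J < (E-Γ)⁻¹I, E > Γ > γ > δ > 0. Define H(u,α) = ℰ(u) + αᵀu + J(α) on ℝⁿ × ℝⁿ. Then there exist μ, μ' > 0 such that μI ≤ D²H(u,α) ≤ μ'I on ℝ^{2n}; specifically, (u,α)ᵀD²H(u,α)(u,α) > ((γ-δ)/2)|u|² + ((γ-δ)/2)|α|²/((E+(δ-γ)/2)(E+δ-γ)) and (u,α)ᵀD²H(u,α)(u,α) ≤ (E+δ+1)|u|² + ((E-Γ)⁻¹+1)|α|². -/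
open RealInnerProductSpace

/-!
In the direction `w = (w₁, w₂)` the Hessian of `H` is
`D²ℰ[w₁, w₁] + 2⟪w₁, w₂⟫ + D²J[w₂, w₂] ≥ E‖w₁‖² - 2‖w₁‖‖w₂‖ + (E + δ - γ)⁻¹‖w₂‖²`.
The cross term is absorbed by Young's inequality `2ab ≤ κa² + κ⁻¹b²` with the midpoint
`κ = E + (δ - γ)/2` of `E` and `E + δ - γ`; what is left over is `E - κ = (γ - δ)/2` in front of
`‖w₁‖²` and `(E + δ - γ)⁻¹ - κ⁻¹ = ((γ - δ)/2) / (κ (E + δ - γ))` in front of `‖w₂‖²`.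
Strictness comes from `D²J` when `w₂ ≠ 0`, and from `E > (γ - δ)/2` when `w₂ = 0`.
The upper bound only needs `2⟪w₁, w₂⟫ ≤ ‖w₁‖² + ‖w₂‖²`.
-/

section Calculus

variable {𝕜 : Type*} [NontriviallyNormedField 𝕜] {V W G : Type*}
  [NormedAddCommGroup V] [NormedSpace 𝕜 V] [NormedAddCommGroup W] [NormedSpace 𝕜 W]
  [NormedAddCommGroup G] [NormedSpace 𝕜 G]

theorem iteratedFDeriv_two_apply_zero (f : V → G) (x : V) :
    iteratedFDeriv 𝕜 2 f x ![0, 0] = 0 :=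
  (iteratedFDeriv 𝕜 2 f x).map_coord_zero 0 rfl

theorem ContinuousLinearMap.iteratedFDeriv_comp_right_apply (L : V →L[𝕜] W) {f : W → G}
    {k : ℕ} (hf : ContDiff 𝕜 k f) (x : V) (v : Fin k → V) :
    iteratedFDeriv 𝕜 k (f ∘ L) x v = iteratedFDeriv 𝕜 k f (L x) (L ∘ v) := by
  rw [L.iteratedFDeriv_comp_right hf x le_rfl,
    ContinuousMultilinearMap.compContinuousLinearMap_apply]
  rfl

theorem IsBoundedBilinearMap.iteratedFDeriv_two_apply {f : V × W → G}
    (h : IsBoundedBilinearMap 𝕜 f) (p v w : V × W) :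
    iteratedFDeriv 𝕜 2 f p ![v, w] = f (v.1, w.2) + f (w.1, v.2) := by
  have hderiv : fderiv 𝕜 f = fun q => h.deriv q := funext h.fderiv
  rw [_root_.iteratedFDeriv_two_apply, hderiv, h.isBoundedLinearMap_deriv.fderiv]
  rfl

end Calculus

theorem quadratic_form_lower_bound {m s : ℝ} (hs : s ≠ 0) (hms : 0 < m + s) (a b : ℝ) :
    (m - s) / 2 * a ^ 2 + (m - s) / 2 * b ^ 2 / ((m + s) / 2 * s)
      ≤ m * a ^ 2 - 2 * a * b + s⁻¹ * b ^ 2 := by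
  have hκ : 0 < (m + s) / 2 := by linarith
  have hinv : s⁻¹ - (m - s) / 2 / ((m + s) / 2 * s) = ((m + s) / 2)⁻¹ := by
    field_simp
    ring
  have hyoung := two_mul_le_add_mul_sq (a := a) (b := b) hκ
  linear_combination hyoung - b ^ 2 * hinv

theorem min_mul_add_le_mul_add_mul {α : Type*} [Semiring α] [LinearOrder α] [IsOrderedRing α]
    {x y a b : α} (ha : 0 ≤ a) (hb : 0 ≤ b) : min x y * (a + b) ≤ x * a + y * b := by
  rw [mul_add]
  gcongr
  exacts [min_le_left x y, min_le_right x y]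

theorem mul_add_mul_le_max_mul_add {α : Type*} [Semiring α] [LinearOrder α] [IsOrderedRing α]
    {x y a b : α} (ha : 0 ≤ a) (hb : 0 ≤ b) : x * a + y * b ≤ max x y * (a + b) := by
  rw [mul_add]
  gcongr
  exacts [le_max_left x y, le_max_right x y]

section Hessian

variable {V : Type*} [NormedAddCommGroup V] [InnerProductSpace ℝ V]
  {f g : V → ℝ}

theorem iteratedFDeriv_two_add_inner_add_apply (hf : ContDiff ℝ 2 f) (hg : ContDiff ℝ 2 g)
    (p w : V × V) :
    iteratedFDeriv ℝ 2 (fun q : V × V => f q.1 + ⟪q.2, q.1⟫ + g q.2) p ![w, w] =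
      iteratedFDeriv ℝ 2 f p.1 ![w.1, w.1] + 2 * ⟪w.1, w.2⟫
        + iteratedFDeriv ℝ 2 g p.2 ![w.2, w.2] := by
  set fst := ContinuousLinearMap.fst ℝ V V
  set snd := ContinuousLinearMap.snd ℝ V V
  have hsplit : (fun q : V × V => f q.1 + ⟪q.2, q.1⟫ + g q.2)
      = f ∘ fst + (fun q => ⟪q.1, q.2⟫) + g ∘ snd :=
    funext fun q => by simp [fst, snd, real_inner_comm]
  have hf' : ContDiff ℝ 2 (f ∘ fst) := hf.comp fst.contDiff
  have hg' : ContDiff ℝ 2 (g ∘ snd) := hg.comp snd.contDiff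
  have hB : ContDiff ℝ 2 (fun q : V × V => ⟪q.1, q.2⟫) := contDiff_fst.inner ℝ contDiff_snd
  have hfB : ContDiff ℝ 2 (f ∘ fst + fun q : V × V => ⟪q.1, q.2⟫) := hf'.add hB
  rw [hsplit, iteratedFDeriv_add_apply hfB.contDiffAt hg'.contDiffAt,
    iteratedFDeriv_add_apply hf'.contDiffAt hB.contDiffAt]
  simp only [add_apply]
  rw [fst.iteratedFDeriv_comp_right_apply hf, snd.iteratedFDeriv_comp_right_apply hg,
    isBoundedBilinearMap_inner.iteratedFDeriv_two_apply]
  have hvec : ∀ L : V × V →L[ℝ] V, ⇑L ∘ ![w, w] = ![L w, L w] := fun L => by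
    ext i; fin_cases i <;> rfl
  rw [hvec, hvec]
  simp only [fst, snd, ContinuousLinearMap.coe_fst', ContinuousLinearMap.coe_snd']
  ring

theorem hessian_lower_bound_lt (hf : ContDiff ℝ 2 f) (hg : ContDiff ℝ 2 g) {m s : ℝ}
    (hs : s ≠ 0) (hms : 0 < m + s)
    (hf_ge : ∀ u w, m * ‖w‖ ^ 2 ≤ iteratedFDeriv ℝ 2 f u ![w, w])
    (hg_gt : ∀ α w, w ≠ 0 → s⁻¹ * ‖w‖ ^ 2 < iteratedFDeriv ℝ 2 g α ![w, w])
    (p w : V × V) (hw : w ≠ 0) :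
    (m - s) / 2 * ‖w.1‖ ^ 2 + (m - s) / 2 * ‖w.2‖ ^ 2 / ((m + s) / 2 * s)
      < iteratedFDeriv ℝ 2 (fun q : V × V => f q.1 + ⟪q.2, q.1⟫ + g q.2) p ![w, w] := by
  rw [iteratedFDeriv_two_add_inner_add_apply hf hg]
  have hf_w := hf_ge p.1 w.1
  rcases eq_or_ne w.2 0 with hw₂ | hw₂
  · have hw₁ : w.1 ≠ 0 := fun hw₁ => hw (Prod.ext hw₁ hw₂)
    have hlt : (m - s) / 2 * ‖w.1‖ ^ 2 < m * ‖w.1‖ ^ 2 := by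
      have : 0 < ‖w.1‖ ^ 2 := by positivity
      nlinarith
    rw [hw₂, iteratedFDeriv_two_apply_zero, inner_zero_right, norm_zero]
    simpa using hlt.trans_le hf_w
  · have hinner : -(‖w.1‖ * ‖w.2‖) ≤ ⟪w.1, w.2⟫ := neg_le_of_abs_le (abs_real_inner_le_norm _ _)
    linarith [hg_gt p.2 w.2 hw₂, quadratic_form_lower_bound hs hms ‖w.1‖ ‖w.2‖]

theorem hessian_lower_bound (hf : ContDiff ℝ 2 f) (hg : ContDiff ℝ 2 g) {m s : ℝ}
    (hs : s ≠ 0) (hms : 0 < m + s)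
    (hf_ge : ∀ u w, m * ‖w‖ ^ 2 ≤ iteratedFDeriv ℝ 2 f u ![w, w])
    (hg_gt : ∀ α w, w ≠ 0 → s⁻¹ * ‖w‖ ^ 2 < iteratedFDeriv ℝ 2 g α ![w, w])
    (p w : V × V) :
    (m - s) / 2 * ‖w.1‖ ^ 2 + (m - s) / 2 * ‖w.2‖ ^ 2 / ((m + s) / 2 * s)
      ≤ iteratedFDeriv ℝ 2 (fun q : V × V => f q.1 + ⟪q.2, q.1⟫ + g q.2) p ![w, w] := by
  rcases eq_or_ne w 0 with rfl | hw
  · simp [iteratedFDeriv_two_apply_zero]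
  · exact (hessian_lower_bound_lt hf hg hs hms hf_ge hg_gt p w hw).le

theorem hessian_upper_bound (hf : ContDiff ℝ 2 f) (hg : ContDiff ℝ 2 g) {M N : ℝ}
    (hf_le : ∀ u w, iteratedFDeriv ℝ 2 f u ![w, w] ≤ M * ‖w‖ ^ 2)
    (hg_le : ∀ α w, iteratedFDeriv ℝ 2 g α ![w, w] ≤ N * ‖w‖ ^ 2) (p w : V × V) :
    iteratedFDeriv ℝ 2 (fun q : V × V => f q.1 + ⟪q.2, q.1⟫ + g q.2) p ![w, w]
      ≤ (M + 1) * ‖w.1‖ ^ 2 + (N + 1) * ‖w.2‖ ^ 2 := by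
  rw [iteratedFDeriv_two_add_inner_add_apply hf hg]
  linarith [hf_le p.1 w.1, hg_le p.2 w.2, real_inner_le_norm w.1 w.2,
    two_mul_le_add_sq ‖w.1‖ ‖w.2‖]

end Hessian

/-- Uniform convexity with bounded Hessian of `H(u,α) = ℰ(u) + αᵀu + J(α)`:
there exist `μ, μ' > 0` with `μI ≤ D²H ≤ μ'I` on `ℝ²ⁿ`; specifically the
quadratic form of `D²H(u,α)` at the vector `(u,α)` is bounded below by
`((γ-δ)/2)‖u‖² + ((γ-δ)/2)‖α‖²/((E+(δ-γ)/2)(E+δ-γ))` and above by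
`(E+δ+1)‖u‖² + ((E-Γ)⁻¹+1)‖α‖²`. -/
theorem stmt_18 (n : ℕ) (γ Γ E δ : ℝ)
    (hδ : 0 < δ) (hγδ : δ < γ) (hΓγ : γ < Γ) (hEΓ : Γ < E)
    (ℰ J : EuclideanSpace ℝ (Fin n) → ℝ)
    (hℰ : ContDiff ℝ 2 ℰ) (hJ : ContDiff ℝ 2 J)
    (hℰbounds : ∀ (u w : EuclideanSpace ℝ (Fin n)),
      E * ‖w‖ ^ 2 ≤ iteratedFDeriv ℝ 2 ℰ u ![w, w] ∧
      iteratedFDeriv ℝ 2 ℰ u ![w, w] ≤ (E + δ) * ‖w‖ ^ 2)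
    (hJbounds : ∀ (α w : EuclideanSpace ℝ (Fin n)), w ≠ 0 →
      (E + δ - γ)⁻¹ * ‖w‖ ^ 2 < iteratedFDeriv ℝ 2 J α ![w, w] ∧
      iteratedFDeriv ℝ 2 J α ![w, w] < (E - Γ)⁻¹ * ‖w‖ ^ 2)
    (H : EuclideanSpace ℝ (Fin n) × EuclideanSpace ℝ (Fin n) → ℝ)
    (hH : ∀ p : EuclideanSpace ℝ (Fin n) × EuclideanSpace ℝ (Fin n),
      H p = ℰ p.1 + ⟪p.2, p.1⟫ + J p.2) :
    (∃ μ μ' : ℝ, 0 < μ ∧ 0 < μ' ∧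
      ∀ (p w : EuclideanSpace ℝ (Fin n) × EuclideanSpace ℝ (Fin n)),
        μ * (‖w.1‖ ^ 2 + ‖w.2‖ ^ 2) ≤ iteratedFDeriv ℝ 2 H p ![w, w] ∧
        iteratedFDeriv ℝ 2 H p ![w, w] ≤ μ' * (‖w.1‖ ^ 2 + ‖w.2‖ ^ 2)) ∧
    ∀ p : EuclideanSpace ℝ (Fin n) × EuclideanSpace ℝ (Fin n), p ≠ 0 →
      ((γ - δ) / 2) * ‖p.1‖ ^ 2
          + ((γ - δ) / 2) * ‖p.2‖ ^ 2 / ((E + (δ - γ) / 2) * (E + δ - γ))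
        < iteratedFDeriv ℝ 2 H p ![p, p] ∧
      iteratedFDeriv ℝ 2 H p ![p, p]
        ≤ (E + δ + 1) * ‖p.1‖ ^ 2 + ((E - Γ)⁻¹ + 1) * ‖p.2‖ ^ 2 := by
  obtain rfl : H = fun p => ℰ p.1 + ⟪p.2, p.1⟫ + J p.2 := funext hH
  have hs : 0 < E + δ - γ := by linarith
  have hJ_le : ∀ α w, iteratedFDeriv ℝ 2 J α ![w, w] ≤ (E - Γ)⁻¹ * ‖w‖ ^ 2 := fun α w => by
    rcases eq_or_ne w 0 with rfl | hw
    · simp [iteratedFDeriv_two_apply_zero]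
    · exact (hJbounds α w hw).2.le
  have lower_lt := hessian_lower_bound_lt hℰ hJ hs.ne' (by linarith)
    (fun u w => (hℰbounds u w).1) (fun α w hw => (hJbounds α w hw).1)
  have lower := hessian_lower_bound hℰ hJ hs.ne' (by linarith)
    (fun u w => (hℰbounds u w).1) (fun α w hw => (hJbounds α w hw).1)
  have upper := hessian_upper_bound hℰ hJ (fun u w => (hℰbounds u w).2) hJ_le
  rw [show (E - (E + δ - γ)) / 2 = (γ - δ) / 2 by ring,
    show (E + (E + δ - γ)) / 2 = E + (δ - γ) / 2 by ring] at lower_lt lower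
  refine ⟨⟨min ((γ - δ) / 2) ((γ - δ) / 2 / ((E + (δ - γ) / 2) * (E + δ - γ))),
    max (E + δ + 1) ((E - Γ)⁻¹ + 1), ?_, ?_, fun p w => ⟨?_, ?_⟩⟩,
    fun p hp => ⟨lower_lt p p hp, upper p p⟩⟩
  · exact lt_min (by linarith) (div_pos (by linarith) (mul_pos (by linarith) hs))
  · exact lt_max_of_lt_left (by linarith)
  · exact ((min_mul_add_le_mul_add_mul (by positivity) (by positivity)).trans_eq (by ring)).trans
      (lower p w)
  · exact (upper p w).trans (mul_add_mul_le_max_mul_add (by positivity) (by positivity))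
end
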